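/- Let n, j be integers with 2 ≤ j ≤ n, and for each natural number k ≠ 1 set a_k = −(π^{(n−j)/2}·(j−1)/4) · Γ((n−j+2)/2) · Γ((k−1)/2) · Γ((j+k−1)/2) / (Γ((n−j+k+1)/2) · Γ((n+k+1)/2)). Then a_0 > 0, a_k < 0 for every k ≥ 2 (in particular a_k ≠ 0 for all k ≠ 1), and the sequence (a_k) is bounded: there exists C > 0 with |a_k| ≤ C for all k ≠ 1. -/

import Mathlib

/-!
Write `a_k = -c · Γ(x) Γ(y) / (Γ(x + d) Γ(y + d))` with `x = (k-1)/2`, `y = (j+k-1)/2`,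
`d = (n-j+2)/2 ≥ 1` and a constant `c > 0`. For `k ≥ 2` all four Gamma values are positive,
so `a_k < 0`; for `k = 0` only `Γ(x) = Γ(-1/2)` is negative, so `a_0 > 0`. Boundedness comes
from `Γ(x) ≤ (1 + 2d)(1 + d) Γ(x + d)` for `x ≥ 1/2`, which follows from the functional
equation and the monotonicity of `Γ` on `[2, ∞)`.
-/

/-- The closed-form multiplier `a_k^n[g_j]` of the integral transform `F_{g_j}` given by
C. Berg's function `g_j`. -/
noncomputable def bergMult (n j k : ℕ) : ℝ :=
  -(Real.pi ^ (((n : ℝ) - (j : ℝ)) / 2) * ((j : ℝ) - 1) / 4) *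
    Real.Gamma (((n : ℝ) - (j : ℝ) + 2) / 2) * Real.Gamma (((k : ℝ) - 1) / 2) *
    Real.Gamma (((j : ℝ) + (k : ℝ) - 1) / 2) /
    (Real.Gamma (((n : ℝ) - (j : ℝ) + (k : ℝ) + 1) / 2) *
      Real.Gamma (((n : ℝ) + (k : ℝ) + 1) / 2))

namespace Real

theorem Gamma_neg_of_mem_Ioo {s : ℝ} (hs : s ∈ Set.Ioo (-1) 0) : Gamma s < 0 := by
  have hpos : 0 < s * Gamma s := by
    rw [← Gamma_add_one hs.2.ne]
    exact Gamma_pos_of_pos (by linarith [hs.1])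
  exact neg_of_mul_pos_right hpos hs.2.le

theorem Gamma_le_mul_Gamma_add {x d : ℝ} (hx : 1 / 2 ≤ x) (hd : 0 ≤ d) :
    Gamma x ≤ (1 + 2 * d) * (1 + d) * Gamma (x + d) := by
  have hx0 : 0 < x := by linarith
  have hshift : ∀ s : ℝ, 0 < s → Gamma (s + 2) = s * (s + 1) * Gamma s := fun s hs => by
    rw [show s + 2 = s + 1 + 1 by ring, Gamma_add_one (by linarith), Gamma_add_one hs.ne']
    ring
  have hmono : Gamma (x + 2) ≤ Gamma (x + d + 2) :=
    Gamma_strictMonoOn_Ici.monotoneOn (by simp only [Set.mem_Ici]; linarith)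
      (by simp only [Set.mem_Ici]; linarith) (by linarith)
  rw [hshift x hx0, hshift (x + d) (by linarith)] at hmono
  -- `x + d ≤ (1 + 2d) x` uses `x ≥ 1/2`, and `x + d + 1 ≤ (1 + d)(x + 1)` uses `x ≥ 0`.
  have hfactor : (x + d) * (x + d + 1) ≤ (1 + 2 * d) * (1 + d) * (x * (x + 1)) := by
    nlinarith [mul_nonneg hd (by linarith : (0 : ℝ) ≤ 2 * x - 1), mul_nonneg hd hx0.le,
      mul_nonneg (mul_nonneg hd hd) hx0.le, mul_nonneg (mul_nonneg hd hx0.le) hx0.le]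
  have hGd := Gamma_pos_of_pos (by linarith : 0 < x + d)
  refine le_of_mul_le_mul_left ?_ (mul_pos hx0 (by linarith : 0 < x + 1))
  calc x * (x + 1) * Gamma x ≤ (x + d) * (x + d + 1) * Gamma (x + d) := hmono
    _ ≤ (1 + 2 * d) * (1 + d) * (x * (x + 1)) * Gamma (x + d) :=
        mul_le_mul_of_nonneg_right hfactor hGd.le
    _ = x * (x + 1) * ((1 + 2 * d) * (1 + d) * Gamma (x + d)) := by ring

theorem Gamma_mul_Gamma_div_le {x y d : ℝ} (hx : 1 / 2 ≤ x) (hy : 1 / 2 ≤ y) (hd : 0 ≤ d) :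
    Gamma x * Gamma y / (Gamma (x + d) * Gamma (y + d)) ≤ ((1 + 2 * d) * (1 + d)) ^ 2 := by
  have hxd := Gamma_pos_of_pos (by linarith : 0 < x + d)
  have hyd := Gamma_pos_of_pos (by linarith : 0 < y + d)
  rw [div_le_iff₀ (mul_pos hxd hyd)]
  calc Gamma x * Gamma y
      ≤ ((1 + 2 * d) * (1 + d) * Gamma (x + d)) * ((1 + 2 * d) * (1 + d) * Gamma (y + d)) :=
        mul_le_mul (Gamma_le_mul_Gamma_add hx hd) (Gamma_le_mul_Gamma_add hy hd)
          (Gamma_pos_of_pos (by linarith)).le (by positivity)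
    _ = ((1 + 2 * d) * (1 + d)) ^ 2 * (Gamma (x + d) * Gamma (y + d)) := by ring

end Real

open Real

noncomputable def bergConst (n j : ℕ) : ℝ :=
  π ^ (((n : ℝ) - j) / 2) * ((j : ℝ) - 1) / 4 * Gamma (((n : ℝ) - j + 2) / 2)

theorem bergConst_pos {n j : ℕ} (hj : 2 ≤ j) (hn : j ≤ n) : 0 < bergConst n j := by
  have hj' : (2 : ℝ) ≤ j := by exact_mod_cast hj
  have hn' : (j : ℝ) ≤ n := by exact_mod_cast hn
  unfold bergConst
  have := Gamma_pos_of_pos (by linarith : 0 < ((n : ℝ) - j + 2) / 2)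
  have := rpow_pos_of_pos pi_pos (((n : ℝ) - j) / 2)
  have : (0 : ℝ) < j - 1 := by linarith
  positivity

theorem bergMult_eq (n j k : ℕ) :
    bergMult n j k = -bergConst n j *
      (Gamma (((k : ℝ) - 1) / 2) * Gamma (((j : ℝ) + k - 1) / 2) /
        (Gamma (((k : ℝ) - 1) / 2 + ((n : ℝ) - j + 2) / 2) *
          Gamma (((j : ℝ) + k - 1) / 2 + ((n : ℝ) - j + 2) / 2))) := by
  rw [show ((k : ℝ) - 1) / 2 + ((n : ℝ) - j + 2) / 2 = ((n : ℝ) - j + k + 1) / 2 by ring,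
    show ((j : ℝ) + k - 1) / 2 + ((n : ℝ) - j + 2) / 2 = ((n : ℝ) + k + 1) / 2 by ring]
  unfold bergMult bergConst
  ring

theorem bergMult_zero_pos {n j : ℕ} (hj : 2 ≤ j) (hn : j ≤ n) : 0 < bergMult n j 0 := by
  have hj' : (2 : ℝ) ≤ j := by exact_mod_cast hj
  have hn' : (j : ℝ) ≤ n := by exact_mod_cast hn
  rw [bergMult_eq, Nat.cast_zero]
  have hx : Gamma (((0 : ℝ) - 1) / 2) < 0 := Gamma_neg_of_mem_Ioo ⟨by norm_num, by norm_num⟩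
  have hy := Gamma_pos_of_pos (by linarith : 0 < ((j : ℝ) + 0 - 1) / 2)
  have hxd := Gamma_pos_of_pos (by linarith : 0 < ((0 : ℝ) - 1) / 2 + ((n : ℝ) - j + 2) / 2)
  have hyd := Gamma_pos_of_pos (by linarith : 0 < ((j : ℝ) + 0 - 1) / 2 + ((n : ℝ) - j + 2) / 2)
  rw [neg_mul, neg_pos]
  exact mul_neg_of_pos_of_neg (bergConst_pos hj hn)
    (div_neg_of_neg_of_pos (mul_neg_of_neg_of_pos hx hy) (mul_pos hxd hyd))

theorem bergMult_neg {n j k : ℕ} (hj : 2 ≤ j) (hn : j ≤ n) (hk : 2 ≤ k) : bergMult n j k < 0 := by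
  have hj' : (2 : ℝ) ≤ j := by exact_mod_cast hj
  have hn' : (j : ℝ) ≤ n := by exact_mod_cast hn
  have hk' : (2 : ℝ) ≤ k := by exact_mod_cast hk
  rw [bergMult_eq, neg_mul, neg_lt_zero]
  have hx := Gamma_pos_of_pos (by linarith : 0 < ((k : ℝ) - 1) / 2)
  have hy := Gamma_pos_of_pos (by linarith : 0 < ((j : ℝ) + k - 1) / 2)
  have hxd := Gamma_pos_of_pos (by linarith : 0 < ((k : ℝ) - 1) / 2 + ((n : ℝ) - j + 2) / 2)
  have hyd := Gamma_pos_of_pos (by linarith : 0 < ((j : ℝ) + k - 1) / 2 + ((n : ℝ) - j + 2) / 2)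
  exact mul_pos (bergConst_pos hj hn) (div_pos (mul_pos hx hy) (mul_pos hxd hyd))

theorem abs_bergMult_le {n j k : ℕ} (hj : 2 ≤ j) (hn : j ≤ n) (hk : 2 ≤ k) :
    |bergMult n j k| ≤
      bergConst n j * ((1 + 2 * (((n : ℝ) - j + 2) / 2)) * (1 + ((n : ℝ) - j + 2) / 2)) ^ 2 := by
  have hj' : (2 : ℝ) ≤ j := by exact_mod_cast hj
  have hn' : (j : ℝ) ≤ n := by exact_mod_cast hn
  have hk' : (2 : ℝ) ≤ k := by exact_mod_cast hk
  rw [abs_of_neg (bergMult_neg hj hn hk), bergMult_eq, neg_mul, neg_neg]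
  exact mul_le_mul_of_nonneg_left
    (Gamma_mul_Gamma_div_le (by linarith) (by linarith) (by linarith)) (bergConst_pos hj hn).le

/-- for `2 ≤ j ≤ n`, the multipliers `a_k = a_k^n[g_j]` satisfy `a_0 > 0`,
`a_k < 0` for `k ≥ 2` (in particular `a_k ≠ 0` for `k ≠ 1`), and are bounded. -/
theorem bergMult_sign_and_bounded (n j : ℕ) (hj : 2 ≤ j) (hn : j ≤ n) :
    0 < bergMult n j 0 ∧
    (∀ k : ℕ, 2 ≤ k → bergMult n j k < 0) ∧
    ∃ C : ℝ, 0 < C ∧ ∀ k : ℕ, k ≠ 1 → |bergMult n j k| ≤ C := by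
  have h0 := bergMult_zero_pos hj hn
  refine ⟨h0, fun k hk => bergMult_neg hj hn hk,
    max (bergMult n j 0) (bergConst n j * ((1 + 2 * (((n : ℝ) - j + 2) / 2)) *
      (1 + ((n : ℝ) - j + 2) / 2)) ^ 2), lt_max_of_lt_left h0, fun k hk => ?_⟩
  rcases k with _ | _ | k
  · exact (abs_of_pos h0).trans_le (le_max_left _ _)
  · exact absurd rfl hk
  · exact (abs_bergMult_le hj hn (by omega)).trans (le_max_right _ _)
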